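/- With f_x(r) = r ( e^{−(r−x)²/2} − e^{−(r+x)²/2} ) / (x √(2π)) for x > 0, and f_0(r) = √(2/π) r² e^{−r²/2}, one has ∫_0^∞ f_0(r)² dr = 3/(4√π), and lim_{x→0⁺} ∫_0^∞ f_x(r)² dr = 3/(4√π). -/

import Mathlib

open MeasureTheory ProbabilityTheory Filter Real

/-- The density of `((x+X)²+Y²+Z²)^{1/2}` for `X,Y,Z` i.i.d. standard normals, `x > 0`. -/
noncomputable def besselDens (x r : ℝ) : ℝ :=
  r * (Real.exp (-(r - x) ^ 2 / 2) - Real.exp (-(r + x) ^ 2 / 2)) / (x * Real.sqrt (2 * π))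

/-- The density of the Euclidean norm of a standard Gaussian vector in `ℝ³`. -/
noncomputable def besselDens0 (r : ℝ) : ℝ := Real.sqrt (2 / π) * r ^ 2 * Real.exp (-r ^ 2 / 2)

/-!
Since `e^{-(r-x)²/2} e^{-(r+x)²/2} = e^{-x²} e^{-r²}`, squaring `f_x` gives three Gaussian
terms. The two diagonal ones, `r² e^{-(r-x)²}` and `r² e^{-(r+x)²}` on `(0, ∞)`, are one function
on the two half-lines after `r ↦ -r`, so together they are the second moment `√π (x² + 1/2)` of a
shifted Gaussian over all of `ℝ`; the cross term contributes `-e^{-x²} √π / 2`. Hence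
`∫_0^∞ f_x² = (1 + (1 - e^{-x²}) / (2x²)) / (2√π)`, which tends to `3 / (4√π)` because
`(e^t - 1) / t → 1`. For `f_0` it is the Gaussian moment `∫_0^∞ r⁴ e^{-r²} = 3√π / 8`.
-/

open Set Topology
open scoped Nat

theorem integral_Ioi_pow_two_mul_mul_exp_neg_sq (k : ℕ) :
    ∫ r in Ioi (0 : ℝ), r ^ (2 * k) * exp (-r ^ 2) = (2 * k - 1 : ℕ)‼ * √π / 2 ^ (k + 1) := by
  have h := integral_rpow_mul_exp_neg_rpow (p := 2) (q := (2 * k : ℕ)) two_pos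
    (by linarith [(Nat.cast_nonneg (2 * k) : (0 : ℝ) ≤ _)])
  rw [show (((2 * k : ℕ) : ℝ) + 1) / 2 = k + 1 / 2 by push_cast; ring,
    Real.Gamma_nat_add_half] at h
  simp only [Real.rpow_natCast, Real.rpow_two] at h
  rw [h, pow_succ]
  ring

theorem integral_pow_two_mul_mul_exp_neg_sq (k : ℕ) :
    ∫ r : ℝ, r ^ (2 * k) * exp (-r ^ 2) = (2 * k - 1 : ℕ)‼ * √π / 2 ^ k := by
  have h := integral_comp_abs (f := fun r : ℝ => r ^ (2 * k) * exp (-r ^ 2))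
  simp only [sq_abs] at h
  simp only [(even_two_mul k).pow_abs] at h
  rw [h, integral_Ioi_pow_two_mul_mul_exp_neg_sq, pow_succ]
  field_simp

theorem integral_eq_zero_of_odd {f : ℝ → ℝ} (hf : ∀ r, f (-r) = -f r) : ∫ r, f r = 0 := by
  have h := integral_neg_eq_self f volume
  simp only [hf, integral_neg] at h
  linarith

theorem integrable_pow_mul_exp_neg_sq (n : ℕ) :
    Integrable fun r : ℝ => r ^ n * exp (-r ^ 2) := by
  simpa [Real.rpow_natCast] using integrable_rpow_mul_exp_neg_mul_sq one_pos
    (by linarith [(Nat.cast_nonneg n : (0 : ℝ) ≤ n)] : (-1 : ℝ) < n)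

theorem add_sq_mul_exp_neg_sq_eq (x u : ℝ) :
    (u + x) ^ 2 * exp (-u ^ 2) =
      u ^ 2 * exp (-u ^ 2) + (2 * x * (u ^ 1 * exp (-u ^ 2)) + x ^ 2 * (u ^ 0 * exp (-u ^ 2))) := by
  ring

theorem integrable_add_sq_mul_exp_neg_sq (x : ℝ) :
    Integrable fun u : ℝ => (u + x) ^ 2 * exp (-u ^ 2) := by
  simp only [add_sq_mul_exp_neg_sq_eq]
  exact (integrable_pow_mul_exp_neg_sq 2).add
    (((integrable_pow_mul_exp_neg_sq 1).const_mul _).add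
      ((integrable_pow_mul_exp_neg_sq 0).const_mul _))

theorem integral_add_sq_mul_exp_neg_sq (x : ℝ) :
    ∫ u : ℝ, (u + x) ^ 2 * exp (-u ^ 2) = √π * (x ^ 2 + 1 / 2) := by
  have h1 := (integrable_pow_mul_exp_neg_sq 1).const_mul (2 * x)
  have h0 := (integrable_pow_mul_exp_neg_sq 0).const_mul (x ^ 2)
  have hodd : ∫ u : ℝ, u ^ 1 * exp (-u ^ 2) = 0 :=
    integral_eq_zero_of_odd fun u => by rw [neg_sq]; ring
  have hm2 := integral_pow_two_mul_mul_exp_neg_sq 1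
  have hm0 := integral_pow_two_mul_mul_exp_neg_sq 0
  simp only [mul_one, mul_zero] at hm2 hm0
  simp only [add_sq_mul_exp_neg_sq_eq]
  rw [integral_add (integrable_pow_mul_exp_neg_sq 2) (h1.fun_add h0), integral_add h1 h0,
    integral_const_mul, integral_const_mul, hodd, hm2, hm0]
  norm_num
  ring

theorem integral_Ioi_add_integral_Ioi_comp_neg {E : Type*} [NormedAddCommGroup E]
    [NormedSpace ℝ E] {f : ℝ → E} (hf : Integrable f) :
    (∫ r in Ioi 0, f r) + ∫ r in Ioi 0, f (-r) = ∫ r, f r := by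
  rw [integral_comp_neg_Ioi, neg_zero,
    ← intervalIntegral.integral_Iic_add_Ioi (b := 0) hf.integrableOn hf.integrableOn]
  exact add_comm _ _

theorem besselDens_sq (x r : ℝ) :
    besselDens x r ^ 2 = (r ^ 2 * exp (-(r - x) ^ 2) - 2 * exp (-x ^ 2) * (r ^ 2 * exp (-r ^ 2))
      + (-r) ^ 2 * exp (-(-r - x) ^ 2)) / (x ^ 2 * (2 * π)) := by
  have hA : exp (-(r - x) ^ 2 / 2) ^ 2 = exp (-(r - x) ^ 2) := by rw [sq, ← exp_add]; ring_nf
  have hB : exp (-(r + x) ^ 2 / 2) ^ 2 = exp (-(-r - x) ^ 2) := by rw [sq, ← exp_add]; ring_nf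
  have hAB : exp (-(r - x) ^ 2 / 2) * exp (-(r + x) ^ 2 / 2) = exp (-x ^ 2) * exp (-r ^ 2) := by
    rw [← exp_add, ← exp_add]; ring_nf
  rw [besselDens, div_pow, mul_pow, mul_pow, sq_sqrt (by positivity)]
  congr 1
  linear_combination r ^ 2 * (hA + hB - 2 * hAB)

theorem integral_Ioi_besselDens_sq {x : ℝ} (hx : x ≠ 0) :
    ∫ r in Ioi 0, besselDens x r ^ 2 = (1 + (1 - exp (-x ^ 2)) / (2 * x ^ 2)) / (2 * √π) := by
  set g : ℝ → ℝ := fun r => r ^ 2 * exp (-(r - x) ^ 2)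
  have hg : Integrable g := by
    simpa [g] using (integrable_add_sq_mul_exp_neg_sq x).comp_sub_right x
  have hg_int : ∫ r, g r = √π * (x ^ 2 + 1 / 2) := by
    rw [← integral_add_sq_mul_exp_neg_sq x,
      ← integral_sub_right_eq_self (fun u => (u + x) ^ 2 * exp (-u ^ 2)) x]
    simp [g]
  have hm2 := integral_Ioi_pow_two_mul_mul_exp_neg_sq 1
  simp only [mul_one] at hm2
  have hπ : √π ^ 2 = π := sq_sqrt pi_pos.le
  calc ∫ r in Ioi 0, besselDens x r ^ 2
      = ((∫ r in Ioi 0, g r) - 2 * exp (-x ^ 2) * (∫ r in Ioi 0, r ^ 2 * exp (-r ^ 2))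
          + ∫ r in Ioi 0, g (-r)) / (x ^ 2 * (2 * π)) := by
        simp only [besselDens_sq]
        rw [integral_div, integral_add, integral_sub, integral_const_mul]
        · exact hg.integrableOn
        · exact ((integrable_pow_mul_exp_neg_sq 2).const_mul _).integrableOn
        · exact (hg.sub ((integrable_pow_mul_exp_neg_sq 2).const_mul _)).integrableOn
        · exact hg.comp_neg.integrableOn
    _ = (√π * (x ^ 2 + 1 / 2) - 2 * exp (-x ^ 2) * (√π / 4)) / (x ^ 2 * (2 * π)) := by
        rw [sub_add_eq_add_sub, integral_Ioi_add_integral_Ioi_comp_neg hg, hg_int, hm2]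
        norm_num
    _ = (1 + (1 - exp (-x ^ 2)) / (2 * x ^ 2)) / (2 * √π) := by
        field_simp
        rw [hπ]
        ring

theorem tendsto_exp_sub_one_div_self :
    Tendsto (fun t : ℝ => (exp t - 1) / t) (𝓝[≠] 0) (𝓝 1) := by
  have h := hasDerivAt_iff_tendsto_slope.mp (hasDerivAt_exp 0)
  simp only [exp_zero] at h
  refine h.congr fun t => ?_
  simp [slope_def_field]

theorem tendsto_integral_Ioi_besselDens_sq :
    Tendsto (fun x : ℝ => ∫ r in Ioi 0, besselDens x r ^ 2) (𝓝[>] 0) (𝓝 (3 / (4 * √π))) := by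
  have hsq : Tendsto (fun x : ℝ => -x ^ 2) (𝓝[>] 0) (𝓝[≠] 0) := by
    refine tendsto_nhdsWithin_iff.mpr ⟨?_, ?_⟩
    · exact tendsto_nhdsWithin_of_tendsto_nhds
        ((by fun_prop : Continuous fun x : ℝ => -x ^ 2).tendsto' 0 0 (by simp))
    · filter_upwards [self_mem_nhdsWithin] with x hx
      exact neg_ne_zero.mpr (pow_ne_zero 2 (ne_of_gt hx))
  have hlim :=
    (((tendsto_exp_sub_one_div_self.comp hsq).div_const 2).const_add 1).div_const (2 * √π)
  have hval : (1 + 1 / 2) / (2 * √π) = 3 / (4 * √π) := by field_simp; norm_num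
  rw [hval] at hlim
  refine hlim.congr' ?_
  filter_upwards [self_mem_nhdsWithin] with x hx
  rw [integral_Ioi_besselDens_sq (ne_of_gt hx), Function.comp_apply]
  congr 2
  field_simp
  ring

theorem integral_Ioi_besselDens0_sq :
    ∫ r in Ioi 0, besselDens0 r ^ 2 = 3 / (4 * √π) := by
  have hpt : ∀ r, besselDens0 r ^ 2 = 2 / π * (r ^ (2 * 2) * exp (-r ^ 2)) := by
    intro r
    have he : exp (-r ^ 2 / 2) ^ 2 = exp (-r ^ 2) := by rw [sq, ← exp_add]; ring_nf
    rw [besselDens0, mul_pow, mul_pow, sq_sqrt (by positivity), he]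
    ring
  have hπ : √π ^ 2 = π := sq_sqrt pi_pos.le
  simp only [hpt]
  rw [integral_const_mul, integral_Ioi_pow_two_mul_mul_exp_neg_sq]
  field_simp
  rw [hπ]
  norm_num [Nat.doubleFactorial]
  ring

/-- `∫_0^∞ f_0(r)² dr = 3/(4√π)` and `∫_0^∞ f_x(r)² dr → 3/(4√π)` as `x → 0⁺`. -/
theorem integral_sq_besselDens :
    (∫ r in Set.Ioi (0:ℝ), besselDens0 r ^ 2) = 3 / (4 * Real.sqrt π) ∧
    Tendsto (fun x : ℝ => ∫ r in Set.Ioi (0:ℝ), besselDens x r ^ 2)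
      (nhdsWithin 0 (Set.Ioi 0)) (nhds (3 / (4 * Real.sqrt π))) :=
  ⟨integral_Ioi_besselDens0_sq, tendsto_integral_Ioi_besselDens_sq⟩
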